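/- arXiv:0805.3382 — 2 statements merged into one kernel-verified Lean document; each statement's English description precedes it below -/
import Mathlib

section
/- Let n ≥ 2, A ∈ ℝ with A ≠ 0, B ∈ ℝ, and for each dimension d and integers m ≤ 0, k ≥ 0 let L^{d,m,k}(q,v) = (1/(4A)) Σ_{i,j=1}^{d} V_1^{(2d−m−i−j)}(q) v_i v_j − B V_1^{(k)}(q), where the separable potentials V^{(s)} are taken in dimension d. Then for every σ ∈ {1,…,n−1}, every l ∈ {σ+1,…,n} and every smooth curve q = (q_1,…,q_{n+1}) : ℝ → ℝ^{n+1}, one has pointwise E_{l+1}(L^{n+1,0,2n+σ+2})(q_1,…,q_{n+1}) = E_l(L^{n,0,2n+σ})(q_1,…,q_n); in particular the left-hand side does not depend on q_{n+1}. -/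
open scoped BigOperators

/-- The separable potentials `V_i^{(k)}` in dimension `n` (0-based index `i`),
defined by `V_i^{(0)} = δ_{in}` and `V_i^{(k+1)} = V_{i+1}^{(k)} − q_i V_1^{(k)}`,
with the convention `V_{n+1}^{(k)} = 0`. -/
noncomputable def Vpot (n : ℕ) : ℕ → (Fin n → ℝ) → Fin n → ℝ
  | 0, _, i => if (i : ℕ) = n - 1 then 1 else 0
  | k + 1, q, i =>
      (if h : (i : ℕ) + 1 < n then Vpot n k q ⟨(i : ℕ) + 1, h⟩ else 0)
        - q i * Vpot n k q ⟨0, i.pos⟩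

/-- The first separable potential `V_1^{(k)}`. -/
noncomputable def V1 (n k : ℕ) (q : Fin n → ℝ) : ℝ :=
  if h : 0 < n then Vpot n k q ⟨0, h⟩ else 0

/-- The Lagrangian `L^{d,m,k}(q,v) = (1/(4A)) ∑_{i,j=1}^d V_1^{(2d−m−i−j)}(q) v_i v_j
− B V_1^{(k)}(q)` in dimension `d` (here `m : ℤ`, `m ≤ 0`). -/
noncomputable def Lag (d : ℕ) (A B : ℝ) (m : ℤ) (k : ℕ) (q v : Fin d → ℝ) : ℝ :=
  (1 / (4 * A)) *
      ∑ i : Fin d, ∑ j : Fin d,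
        V1 d ((2 * (d : ℤ) - m - ((i : ℕ) + 1) - ((j : ℕ) + 1)).toNat) q * v i * v j
    - B * V1 d k q

/-- Partial derivative of `f : ℝ^d → ℝ` with respect to the `r`-th coordinate at `x`. -/
noncomputable def pderiv' (d : ℕ) (f : (Fin d → ℝ) → ℝ) (r : Fin d) (x : Fin d → ℝ) : ℝ :=
  deriv (fun t => f (Function.update x r t)) (x r)

/-- The `i`-th Euler–Lagrange expression of the Lagrangian `L(q,v)` along a curve
`q : ℝ → ℝ^d`:  `E_i(L)(x) = ∂L/∂q_i(q(x),q'(x)) − d/dx[∂L/∂v_i(q(x),q'(x))]`. -/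
noncomputable def EL (d : ℕ) (L : (Fin d → ℝ) → (Fin d → ℝ) → ℝ)
    (i : Fin d) (q : ℝ → Fin d → ℝ) (x : ℝ) : ℝ :=
  pderiv' d (fun a => L a (deriv q x)) i (q x)
    - deriv (fun y => pderiv' d (fun b => L (q y) b) i (deriv q y)) x



set_option linter.unusedVariables false
set_option linter.unnecessarySimpa false
set_option linter.unusedTactic false
set_option linter.unreachableTactic false

lemma vpot_differentiable (n k : ℕ) (i : Fin n) :
    Differentiable ℝ (fun q : Fin n → ℝ => Vpot n k q i) := by
  induction k generalizing i with
  | zero => simpa [Vpot] using differentiable_const _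
  | succ k ih =>
    have hproj : Differentiable ℝ (fun q : Fin n → ℝ => q i) :=
      (ContinuousLinearMap.proj i : (Fin n → ℝ) →L[ℝ] ℝ).differentiable
    simp only [Vpot]
    by_cases h : (i : ℕ) + 1 < n
    · simp only [h, dif_pos]
      exact (ih _).sub (hproj.mul (ih _))
    · simp only [h, dif_neg, not_false_iff]
      exact (differentiable_const _).sub (hproj.mul (ih _))

lemma update_differentiable (n : ℕ) (x : Fin n → ℝ) (r : Fin n) :
    Differentiable ℝ (fun t : ℝ => Function.update x r t) := by
  rw [differentiable_pi]
  intro j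
  simp only [Function.update_apply]
  by_cases h : j = r <;> simp [h, differentiable_id, differentiable_const]

lemma vpot_update_differentiable (n k : ℕ) (i r : Fin n) (x : Fin n → ℝ) :
    Differentiable ℝ (fun t : ℝ => Vpot n k (Function.update x r t) i) :=
  (vpot_differentiable n k i).comp (update_differentiable n x r)


lemma pderiv'_vpot_succ (n k : ℕ) (i r : Fin n) (x : Fin n → ℝ) :
    pderiv' n (fun q => Vpot n (k+1) q i) r x
      = (if h : (i : ℕ) + 1 < n then pderiv' n (fun q => Vpot n k q ⟨(i:ℕ)+1, h⟩) r x else 0)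
        - ((if r = i then Vpot n k x ⟨0, i.pos⟩ else 0)
            + x i * pderiv' n (fun q => Vpot n k q ⟨0, i.pos⟩) r x) := by
  have hu : ∀ (j : Fin n), HasDerivAt (fun t : ℝ => Function.update x r t j)
      (if j = r then 1 else 0) (x r) := by
    intro j
    simp only [Function.update_apply]
    by_cases h : j = r <;> simp only [h, if_pos, if_neg]
    · exact hasDerivAt_id' .. |>.congr_deriv rfl
    · exact hasDerivAt_const _ _
  have hV : ∀ (m : ℕ) (j : Fin n), HasDerivAt (fun t : ℝ => Vpot n m (Function.update x r t) j)
      (pderiv' n (fun q => Vpot n m q j) r x) (x r) :=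
    fun m j => (vpot_update_differentiable n m j r x (x r)).hasDerivAt
  have key : HasDerivAt (fun t : ℝ => Vpot n (k+1) (Function.update x r t) i)
      ((if h : (i : ℕ) + 1 < n then pderiv' n (fun q => Vpot n k q ⟨(i:ℕ)+1, h⟩) r x else 0)
        - ((if r = i then Vpot n k x ⟨0, i.pos⟩ else 0)
            + x i * pderiv' n (fun q => Vpot n k q ⟨0, i.pos⟩) r x)) (x r) := by
    simp only [Vpot]
    have hmul : HasDerivAt (fun t : ℝ =>
        Function.update x r t i * Vpot n k (Function.update x r t) ⟨0, i.pos⟩)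
        ((if r = i then Vpot n k x ⟨0, i.pos⟩ else 0)
          + x i * pderiv' n (fun q => Vpot n k q ⟨0, i.pos⟩) r x) (x r) := by
      have := (hu i).fun_mul (hV k ⟨0, i.pos⟩)
      simp only [Function.update_eq_self] at this
      refine this.congr_deriv ?_
      by_cases h : i = r
      · subst h; simp
      · simp [h, Ne.symm h]
    by_cases h : (i : ℕ) + 1 < n
    · simp only [h, dif_pos]
      exact (hV k ⟨(i:ℕ)+1, h⟩).sub hmul
    · simp only [h, dif_neg, not_false_iff]
      exact (hasDerivAt_const _ _).sub hmul
  rw [pderiv']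
  exact key.deriv

lemma vpot_const (n k : ℕ) (i : Fin n) (h : (i : ℕ) + k + 1 ≤ n) (q : Fin n → ℝ) :
    Vpot n k q i = if (i : ℕ) + k + 1 = n then 1 else 0 := by
  induction k generalizing i with
  | zero =>
    simp only [Vpot]
    have : ((i : ℕ) = n - 1) ↔ ((i : ℕ) + 0 + 1 = n) := by omega
    simp [this]
  | succ k ih =>
    have h1 : (i : ℕ) + 1 < n := by omega
    simp only [Vpot, h1, dif_pos]
    rw [ih ⟨(i:ℕ)+1, h1⟩ (by simpa using by omega), ih ⟨0, i.pos⟩ (by simpa using by omega)]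
    have h2 : ¬ ((0:ℕ) + k + 1 = n) := by omega
    have h2' : ¬ (k + 1 = n) := by omega
    have h3 : ((i:ℕ) + 1 + k + 1 = n) ↔ ((i:ℕ) + (k+1) + 1 = n) := by omega
    simp [h2, h2', h3]

lemma pderiv'_vpot_const (n k : ℕ) (i r : Fin n) (h : (i : ℕ) + k + 1 ≤ n) (x : Fin n → ℝ) :
    pderiv' n (fun q => Vpot n k q i) r x = 0 := by
  rw [pderiv']
  have : (fun t : ℝ => Vpot n k (Function.update x r t) i)
      = fun _ => if (i : ℕ) + k + 1 = n then (1:ℝ) else 0 := by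
    funext t; exact vpot_const n k i h _
  rw [this, deriv_const]

lemma vpot_shift (n k : ℕ) (i r r' : Fin n) (hr : (r' : ℕ) + 1 = (r : ℕ)) (x : Fin n → ℝ) :
    pderiv' n (fun q => Vpot n (k+1) q i) r x
      = pderiv' n (fun q => Vpot n k q i) r' x
        - (if (r : ℕ) = (i : ℕ) then Vpot n k x ⟨0, i.pos⟩ else 0) := by
  induction k generalizing i with
  | zero =>
    rw [pderiv'_vpot_succ]
    rw [pderiv'_vpot_const n 0 i r' (by omega) x]
    have hz : pderiv' n (fun q => Vpot n 0 q ⟨0, i.pos⟩) r x = 0 :=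
      pderiv'_vpot_const n 0 _ r (by simp; omega) x
    rw [hz]
    have : (if r = i then Vpot n 0 x ⟨0, i.pos⟩ else 0)
        = (if (r:ℕ) = (i:ℕ) then Vpot n 0 x ⟨0, i.pos⟩ else 0) := by
      simp [Fin.ext_iff]
    rw [this]
    by_cases h : (i : ℕ) + 1 < n
    · rw [dif_pos h, pderiv'_vpot_const n 0 ⟨(i:ℕ)+1, h⟩ r (by simp; omega) x]; ring
    · rw [dif_neg h]; ring
  | succ k ih =>
    have e1 := pderiv'_vpot_succ n (k+1) i r x
    have e2 := pderiv'_vpot_succ n k i r' x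
    by_cases h : (i : ℕ) + 1 < n
    · rw [dif_pos h] at e1 e2
      rw [e1, e2, ih ⟨(i:ℕ)+1, h⟩, ih ⟨0, i.pos⟩]
      have h4 : (⟨0, Fin.pos (⟨(i:ℕ)+1, h⟩ : Fin n)⟩ : Fin n) = ⟨0, i.pos⟩ := rfl
      simp only [h4, Fin.ext_iff, Fin.val_mk]
      split_ifs <;> first | (exfalso; omega) | ring
    · rw [dif_neg h] at e1 e2
      rw [e1, e2, ih ⟨0, i.pos⟩]
      simp only [Fin.ext_iff, Fin.val_mk]
      split_ifs <;> first | (exfalso; omega) | ring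

lemma vpot_p0 (n : ℕ) (h0 : 0 < n) (r k : ℕ) (hrn : r < n) (hk : r ≤ k) (x : Fin n → ℝ) :
    pderiv' n (fun q => Vpot n k q ⟨0, h0⟩) ⟨r, hrn⟩ x
      = pderiv' n (fun q => Vpot n (k - r) q ⟨0, h0⟩) ⟨0, h0⟩ x := by
  induction r generalizing k with
  | zero => simp
  | succ r ihr =>
    have hk1 : k - 1 + 1 = k := by omega
    rw [← hk1, vpot_shift n (k-1) ⟨0, h0⟩ ⟨r+1, hrn⟩ ⟨r, by omega⟩ (by simp) x]
    have : ¬ (((⟨r+1, hrn⟩ : Fin n) : ℕ) = ((⟨0, h0⟩ : Fin n) : ℕ)) := by simp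
    rw [if_neg this, sub_zero, ihr (k-1) (by omega) (by omega)]
    have he : k - 1 - r = k - 1 + 1 - (r + 1) := by omega
    rw [he]

lemma vpot_pzero (n : ℕ) (h0 : 0 < n) (r k : ℕ) (hrn : r < n) (hk : k < r) (x : Fin n → ℝ) :
    pderiv' n (fun q => Vpot n k q ⟨0, h0⟩) ⟨r, hrn⟩ x = 0 := by
  induction k generalizing r with
  | zero => exact pderiv'_vpot_const n 0 ⟨0, h0⟩ ⟨r, hrn⟩ (by simp; omega) x
  | succ k ihk =>
    rw [vpot_shift n k ⟨0, h0⟩ ⟨r, hrn⟩ ⟨r-1, by omega⟩ (by simp; omega) x]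
    have : ¬ (((⟨r, hrn⟩ : Fin n) : ℕ) = ((⟨0, h0⟩ : Fin n) : ℕ)) := by simp; omega
    rw [if_neg this, sub_zero, ihk (r-1) (by omega) (by omega)]

lemma vpot_dim (n : ℕ) (hn : 1 ≤ n) (k : ℕ) (hk1 : 1 ≤ k) (i : Fin (n+1))
    (hik : (i : ℕ) + k ≤ 2*n+1) (Q : Fin (n+1) → ℝ) :
    Vpot (n+1) k Q i
      = (if h : (i : ℕ) < n then Vpot n (k-1) (fun j => Q j.castSucc) ⟨(i:ℕ), h⟩ else 0)
        - (if (i : ℕ) + k = 2*n+1 then Q (Fin.last n) else 0) := by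
  induction k generalizing i with
  | zero => omega
  | succ k ihk =>
    rcases Nat.eq_zero_or_pos k with hk0 | hkpos
    · subst hk0
      simp only [Vpot]
      by_cases h : (i:ℕ) < n
      · have h2 : (i:ℕ) + 1 < n + 1 := by omega
        rw [dif_pos h2, dif_pos h]
        try simp only [Fin.val_mk, Nat.add_sub_cancel, Vpot]
        split_ifs <;> first | (exfalso; omega) | ring
      · have h2 : ¬ ((i:ℕ) + 1 < n + 1) := by omega
        rw [dif_neg h2, dif_neg h]
        try simp only [Fin.val_mk]
        split_ifs <;> first | (exfalso; omega) | ring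
    · -- step: k ≥ 1
      have h0' : (0:ℕ) < n + 1 := by omega
      simp only [Vpot]
      have hzero := ihk hkpos ⟨0, h0'⟩ (by simp; omega)
      rw [hzero]
      simp only [Fin.val_mk]
      rw [if_neg (by omega : ¬ ((0:ℕ) + k = 2*n+1)), sub_zero,
        dif_pos (by omega : (0:ℕ) < n)]
      by_cases hcase : (i:ℕ) < n
      · have h2 : (i:ℕ) + 1 < n + 1 := by omega
        rw [dif_pos h2, ihk hkpos ⟨(i:ℕ)+1, h2⟩ (by simp; omega), dif_pos hcase]
        have hkk : k - 1 + 1 = k := by omega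
        conv_rhs => rw [← hkk]
        simp only [Vpot, Fin.val_mk, Nat.add_sub_cancel]
        have hQ : Q i = Q (Fin.castSucc ⟨(i:ℕ), hcase⟩) := by
          congr 1
          all_goals (ext; simp)
        rw [hQ]
        by_cases h3 : (i:ℕ) + 1 < n
        · simp only [dif_pos h3]
          split_ifs <;> first | (exfalso; omega) | ring | rfl
        · simp only [dif_neg h3]
          split_ifs <;> first | (exfalso; omega) | ring | rfl
      · have hi : (i:ℕ) = n := by omega
        have h2 : ¬ ((i:ℕ) + 1 < n + 1) := by omega
        rw [dif_neg h2, dif_neg hcase]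
        rw [vpot_const n (k-1) ⟨0, by omega⟩ (by simp; omega)]
        have hQl : Q i = Q (Fin.last n) := by
          congr 1
          all_goals (ext; simpa using hi)
        rw [hQl]
        try simp only [Fin.val_mk]
        split_ifs <;> first | (exfalso; omega) | ring

lemma update_restrict (n : ℕ) (Q : Fin (n+1) → ℝ) (r : Fin n) (t : ℝ) :
    (fun j : Fin n => Function.update Q r.castSucc t j.castSucc)
      = Function.update (fun j : Fin n => Q j.castSucc) r t := by
  funext j
  rw [Function.update_apply, Function.update_apply]
  by_cases h : j = r
  · simp [h]
  · rw [if_neg (fun hh => h (Fin.castSucc_injective n hh)), if_neg h]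

lemma pderiv'_restrict (n : ℕ) (F : (Fin n → ℝ) → ℝ) (r : Fin n) (Q : Fin (n+1) → ℝ) :
    pderiv' (n+1) (fun Q' => F (fun j => Q' j.castSucc)) r.castSucc Q
      = pderiv' n F r (fun j => Q j.castSucc) := by
  unfold pderiv'
  simp only [update_restrict]

lemma pderiv'_dim (n : ℕ) (hn : 1 ≤ n) (s : ℕ) (hs1 : 1 ≤ s) (hs : s ≤ 2*n+1)
    (Q : Fin (n+1) → ℝ) :
    pderiv' (n+1) (fun Q' => Vpot (n+1) s Q' ⟨0, by omega⟩) ⟨0, by omega⟩ Q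
      = pderiv' n (fun q => Vpot n (s-1) q ⟨0, hn⟩) ⟨0, hn⟩ (fun j => Q j.castSucc) := by
  have h0 : (0:ℕ) < n + 1 := by omega
  have hfun : ∀ Q' : Fin (n+1) → ℝ, Vpot (n+1) s Q' ⟨0, h0⟩
      = Vpot n (s-1) (fun j => Q' j.castSucc) ⟨0, hn⟩
          - (if (0:ℕ) + s = 2*n+1 then Q' (Fin.last n) else 0) := by
    intro Q'
    rw [vpot_dim n hn s hs1 ⟨0, h0⟩ (by simp; omega) Q']
    rw [dif_pos (show ((⟨0, h0⟩ : Fin (n+1)) : ℕ) < n from hn)]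
  show deriv (fun t => Vpot (n+1) s (Function.update Q ⟨0,h0⟩ t) ⟨0,h0⟩) (Q ⟨0,h0⟩)
      = deriv (fun t => Vpot n (s-1) (Function.update (fun j : Fin n => Q j.castSucc) ⟨0,hn⟩ t) ⟨0,hn⟩)
          ((fun j : Fin n => Q j.castSucc) ⟨0,hn⟩)
  simp only [hfun]
  have hlast : ∀ t : ℝ, Function.update Q (⟨0,h0⟩ : Fin (n+1)) t (Fin.last n) = Q (Fin.last n) := by
    intro t
    rw [Function.update_apply, if_neg]
    intro hh
    have := congrArg Fin.val hh
    simp [Fin.last] at this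
    omega
  have hupd : ∀ t : ℝ, (fun j : Fin n => Function.update Q (⟨0,h0⟩ : Fin (n+1)) t j.castSucc)
      = Function.update (fun j : Fin n => Q j.castSucc) ⟨0, hn⟩ t := by
    intro t
    exact update_restrict n Q ⟨0, hn⟩ t
  have hrw : (fun t : ℝ => Vpot n (s-1) (fun j : Fin n =>
        Function.update Q (⟨0,h0⟩ : Fin (n+1)) t j.castSucc) ⟨0, hn⟩
        - (if (0:ℕ) + s = 2*n+1 then Function.update Q (⟨0,h0⟩ : Fin (n+1)) t (Fin.last n) else 0))
      = fun t => Vpot n (s-1) (Function.update (fun j : Fin n => Q j.castSucc) ⟨0, hn⟩ t) ⟨0, hn⟩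
          - (if (0:ℕ) + s = 2*n+1 then Q (Fin.last n) else 0) := by
    funext t
    rw [hupd t, hlast t]
  rw [hrw]
  rw [deriv_sub_const]
  rfl



lemma V1_eq (n k : ℕ) (h : 0 < n) (q : Fin n → ℝ) : V1 n k q = Vpot n k q ⟨0, h⟩ := by
  rw [V1, dif_pos h]

lemma pderiv'_Lag_q (d : ℕ) (hd : 0 < d) (A B : ℝ) (m : ℤ) (k : ℕ) (w : Fin d → ℝ)
    (r : Fin d) (x : Fin d → ℝ) :
    pderiv' d (fun b => Lag d A B m k b w) r x
      = (1 / (4 * A)) * ∑ i : Fin d, ∑ j : Fin d,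
          pderiv' d (fun q =>
            Vpot d ((2 * (d : ℤ) - m - ((i : ℕ) + 1) - ((j : ℕ) + 1)).toNat) q ⟨0, hd⟩) r x
            * w i * w j
        - B * pderiv' d (fun q => Vpot d k q ⟨0, hd⟩) r x := by
  have hV : ∀ (m' : ℕ), HasDerivAt (fun t : ℝ => Vpot d m' (Function.update x r t) ⟨0, hd⟩)
      (pderiv' d (fun q => Vpot d m' q ⟨0, hd⟩) r x) (x r) :=
    fun m' => (vpot_update_differentiable d m' ⟨0, hd⟩ r x (x r)).hasDerivAt
  have key : HasDerivAt (fun t : ℝ => Lag d A B m k (Function.update x r t) w)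
      ((1 / (4 * A)) * ∑ i : Fin d, ∑ j : Fin d,
          pderiv' d (fun q =>
            Vpot d ((2 * (d : ℤ) - m - ((i : ℕ) + 1) - ((j : ℕ) + 1)).toNat) q ⟨0, hd⟩) r x
            * w i * w j
        - B * pderiv' d (fun q => Vpot d k q ⟨0, hd⟩) r x) (x r) := by
    unfold Lag
    simp only [V1_eq _ _ hd]
    exact (HasDerivAt.const_mul _ (HasDerivAt.fun_sum (fun i _ => HasDerivAt.fun_sum (fun j _ =>
      ((hV _).mul_const (w i)).mul_const (w j))))).fun_sub ((hV k).const_mul B)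
  exact key.deriv

lemma pderiv'_Lag_v (d : ℕ) (hd : 0 < d) (A B : ℝ) (m : ℤ) (k : ℕ) (a : Fin d → ℝ)
    (r : Fin d) (w : Fin d → ℝ) :
    pderiv' d (fun b => Lag d A B m k a b) r w
      = (1 / (4 * A)) * (∑ j : Fin d,
          V1 d ((2 * (d : ℤ) - m - ((r : ℕ) + 1) - ((j : ℕ) + 1)).toNat) a * w j
        + ∑ i : Fin d,
          V1 d ((2 * (d : ℤ) - m - ((i : ℕ) + 1) - ((r : ℕ) + 1)).toNat) a * w i) := by
  have hu : ∀ (j : Fin d), HasDerivAt (fun t : ℝ => Function.update w r t j)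
      (if j = r then 1 else 0) (w r) := by
    intro j
    simp only [Function.update_apply]
    by_cases h : j = r
    · simp only [h, if_pos]
      exact hasDerivAt_id' ..
    · simp only [h, if_neg, not_false_iff]
      exact hasDerivAt_const _ _
  have key : HasDerivAt (fun t : ℝ => Lag d A B m k a (Function.update w r t))
      (∑ i : Fin d, ∑ j : Fin d,
        ((1 / (4 * A)) * (V1 d ((2 * (d : ℤ) - m - ((i : ℕ) + 1) - ((j : ℕ) + 1)).toNat) a)
          * ((if i = r then (1:ℝ) else 0) * w j + w i * (if j = r then 1 else 0)))) (w r) := by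
    unfold Lag
    have h1 : HasDerivAt (fun t : ℝ => (1 / (4 * A)) *
        ∑ i : Fin d, ∑ j : Fin d,
          V1 d ((2 * (d : ℤ) - m - ((i : ℕ) + 1) - ((j : ℕ) + 1)).toNat) a
            * Function.update w r t i * Function.update w r t j)
        (∑ i : Fin d, ∑ j : Fin d,
        ((1 / (4 * A)) * (V1 d ((2 * (d : ℤ) - m - ((i : ℕ) + 1) - ((j : ℕ) + 1)).toNat) a)
          * ((if i = r then (1:ℝ) else 0) * w j + w i * (if j = r then 1 else 0)))) (w r) := by
      have h2 : ∀ (i j : Fin d), HasDerivAt (fun t : ℝ =>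
          V1 d ((2 * (d : ℤ) - m - ((i : ℕ) + 1) - ((j : ℕ) + 1)).toNat) a
            * Function.update w r t i * Function.update w r t j)
          ((V1 d ((2 * (d : ℤ) - m - ((i : ℕ) + 1) - ((j : ℕ) + 1)).toNat) a)
            * ((if i = r then (1:ℝ) else 0) * w j + w i * (if j = r then 1 else 0))) (w r) := by
        intro i j
        have := ((hu i).const_mul
          (V1 d ((2 * (d : ℤ) - m - ((i : ℕ) + 1) - ((j : ℕ) + 1)).toNat) a)).fun_mul (hu j)
        simp only [Function.update_eq_self] at this
        refine this.congr_deriv ?_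
        ring
      have h3 := HasDerivAt.fun_sum (fun i (_ : i ∈ Finset.univ) => HasDerivAt.fun_sum
        (fun j (_ : j ∈ Finset.univ) => h2 i j))
      have h4 := h3.const_mul (1 / (4 * A))
      refine h4.congr_deriv ?_
      rw [Finset.mul_sum]
      congr 1
      funext i
      rw [Finset.mul_sum]
      congr 1
      funext j
      ring
    have h5 : HasDerivAt (fun _ : ℝ => B * V1 d k a) 0 (w r) := hasDerivAt_const _ _
    simpa using h1.fun_sub h5
  unfold pderiv'
  rw [key.deriv]
  have step1 : (∑ i : Fin d, ∑ j : Fin d,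
      ((1 / (4 * A)) * (V1 d ((2 * (d : ℤ) - m - ((i : ℕ) + 1) - ((j : ℕ) + 1)).toNat) a)
        * ((if i = r then (1:ℝ) else 0) * w j + w i * (if j = r then 1 else 0))))
      = (∑ i : Fin d, ∑ j : Fin d, (if i = r then
          (1 / (4 * A)) * (V1 d ((2 * (d : ℤ) - m - ((i : ℕ) + 1) - ((j : ℕ) + 1)).toNat) a * w j)
          else 0))
        + (∑ i : Fin d, ∑ j : Fin d, (if j = r then
          (1 / (4 * A)) * (V1 d ((2 * (d : ℤ) - m - ((i : ℕ) + 1) - ((j : ℕ) + 1)).toNat) a * w i)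
          else 0)) := by
    rw [← Finset.sum_add_distrib]
    apply Finset.sum_congr rfl
    intro i _
    rw [← Finset.sum_add_distrib]
    apply Finset.sum_congr rfl
    intro j _
    split_ifs <;> ring
  rw [step1]
  have step2 : (∑ i : Fin d, ∑ j : Fin d, (if i = r then
      (1 / (4 * A)) * (V1 d ((2 * (d : ℤ) - m - ((i : ℕ) + 1) - ((j : ℕ) + 1)).toNat) a * w j)
      else 0))
      = (1 / (4 * A)) * ∑ j : Fin d,
          V1 d ((2 * (d : ℤ) - m - ((r : ℕ) + 1) - ((j : ℕ) + 1)).toNat) a * w j := by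
    have hpull : ∀ i : Fin d, (∑ j : Fin d, (if i = r then
        (1 / (4 * A)) * (V1 d ((2 * (d : ℤ) - m - ((i : ℕ) + 1) - ((j : ℕ) + 1)).toNat) a * w j)
        else 0))
        = if i = r then (1 / (4 * A)) * ∑ j : Fin d,
            V1 d ((2 * (d : ℤ) - m - ((i : ℕ) + 1) - ((j : ℕ) + 1)).toNat) a * w j else 0 := by
      intro i
      split_ifs with h
      · rw [Finset.mul_sum]
      · simp
    simp only [hpull]
    rw [Finset.sum_ite_eq' Finset.univ r]
    simp
  have step3 : (∑ i : Fin d, ∑ j : Fin d, (if j = r then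
      (1 / (4 * A)) * (V1 d ((2 * (d : ℤ) - m - ((i : ℕ) + 1) - ((j : ℕ) + 1)).toNat) a * w i)
      else 0))
      = (1 / (4 * A)) * ∑ i : Fin d,
          V1 d ((2 * (d : ℤ) - m - ((i : ℕ) + 1) - ((r : ℕ) + 1)).toNat) a * w i := by
    simp only [Finset.sum_ite_eq' Finset.univ, Finset.mem_univ, if_true]
    rw [← Finset.mul_sum]
  rw [step2, step3]
  ring

lemma bridge_term (n : ℕ) (hn : 1 ≤ n) (l : ℕ) (hl1 : 1 ≤ l) (hln : l ≤ n)
    (k : ℕ) (hk2 : 2 ≤ k) (hkb : k ≤ 2*n+1+l) (Q : Fin (n+1) → ℝ) :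
    pderiv' (n+1) (fun Q' => Vpot (n+1) k Q' ⟨0, by omega⟩) ⟨l, by omega⟩ Q
      = pderiv' n (fun q => Vpot n (k-2) q ⟨0, hn⟩) ⟨l-1, by omega⟩ (fun j => Q j.castSucc) := by
  have h0 : (0:ℕ) < n + 1 := by omega
  by_cases hkl : l + 1 ≤ k
  · rw [vpot_p0 (n+1) h0 l k (by omega) (by omega) Q]
    rw [pderiv'_dim n hn (k-l) (by omega) (by omega) Q]
    rw [vpot_p0 n hn (l-1) (k-2) (by omega) (by omega)]
    have : k - l - 1 = k - 2 - (l - 1) := by omega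
    rw [this]
  · -- k ≤ l : both sides vanish
    have hRHS : pderiv' n (fun q => Vpot n (k-2) q ⟨0, hn⟩) ⟨l-1, by omega⟩
        (fun j => Q j.castSucc) = 0 :=
      vpot_pzero n hn (l-1) (k-2) (by omega) (by omega) _
    rw [hRHS]
    rcases Nat.lt_or_ge k l with h | h
    · exact vpot_pzero (n+1) h0 l k (by omega) h Q
    · have hkl' : k = l := by omega
      subst hkl'
      rw [vpot_p0 (n+1) h0 k k (by omega) (le_refl k) Q]
      simp only [Nat.sub_self]
      exact pderiv'_vpot_const (n+1) 0 ⟨0, h0⟩ ⟨0, h0⟩ (by simp) Q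

lemma bridge_small (n : ℕ) (l K : ℕ) (hl1 : 1 ≤ l) (hln : l ≤ n) (hK : K ≤ n)
    (Q : Fin (n+1) → ℝ) :
    pderiv' (n+1) (fun Q' => Vpot (n+1) K Q' ⟨0, by omega⟩) ⟨l, by omega⟩ Q = 0 := by
  have h0 : (0:ℕ) < n + 1 := by omega
  rcases Nat.lt_or_ge K l with h | h
  · exact vpot_pzero (n+1) h0 l K (by omega) h Q
  · rw [vpot_p0 (n+1) h0 l K (by omega) h Q]
    exact pderiv'_vpot_const (n+1) (K-l) ⟨0, h0⟩ ⟨0, h0⟩ (by simp; omega) Q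

lemma v1_dim_val (n : ℕ) (hn : 1 ≤ n) (k : ℕ) (hk1 : 1 ≤ k) (hk : k ≤ 2*n)
    (Q : Fin (n+1) → ℝ) :
    Vpot (n+1) k Q ⟨0, by omega⟩ = Vpot n (k-1) (fun j => Q j.castSucc) ⟨0, hn⟩ := by
  rw [vpot_dim n hn k hk1 ⟨0, by omega⟩ (by simp; omega) Q]
  rw [dif_pos (show ((⟨0, by omega⟩ : Fin (n+1)) : ℕ) < n from hn)]
  rw [if_neg (by simp; omega)]
  simp

lemma v1_val_small (n : ℕ) (hn : 1 ≤ n) (s : ℕ) (hs : s ≤ n - 1) (Q : Fin (n+1) → ℝ) :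
    Vpot (n+1) s Q ⟨0, by omega⟩ = 0 := by
  rw [vpot_const (n+1) s ⟨0, by omega⟩ (by simp; omega) Q]
  rw [if_neg (by simp; omega)]

lemma V1_dim (n : ℕ) (hn : 1 ≤ n) (k : ℕ) (hk1 : 1 ≤ k) (hk : k ≤ 2*n) (Q : Fin (n+1) → ℝ) :
    V1 (n+1) k Q = V1 n (k-1) (fun j => Q j.castSucc) := by
  rw [V1_eq (n+1) k (by omega), V1_eq n (k-1) (by omega)]
  exact v1_dim_val n hn k hk1 hk Q

lemma V1_small (n : ℕ) (hn : 1 ≤ n) (s : ℕ) (hs : s ≤ n - 1) (Q : Fin (n+1) → ℝ) :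
    V1 (n+1) s Q = 0 := by
  rw [V1_eq (n+1) s (by omega)]
  exact v1_val_small n hn s hs Q


lemma deriv_restrict (n : ℕ) (q : ℝ → Fin (n+1) → ℝ) (hq : Differentiable ℝ q) (y : ℝ) :
    deriv (fun z => fun i : Fin n => q z i.castSucc) y = fun i => deriv q y i.castSucc := by
  have h1 : HasDerivAt q (deriv q y) y := (hq y).hasDerivAt
  have h2 : ∀ j : Fin (n+1), HasDerivAt (fun z => q z j) (deriv q y j) y :=
    fun j => (hasDerivAt_pi.mp h1) j
  exact (hasDerivAt_pi.mpr (fun i : Fin n => h2 i.castSucc)).deriv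

set_option maxHeartbeats 1000000 in
lemma claim1 (n : ℕ) (hn : 2 ≤ n) (A B : ℝ) (σ l : ℕ) (hσ1 : 1 ≤ σ)
    (hl1 : σ+1 ≤ l) (hl2 : l ≤ n) (a w : Fin (n+1) → ℝ) :
    pderiv' (n+1) (fun b => Lag (n+1) A B 0 (2*n+σ+2) b w) ⟨l, by have := hl2; omega⟩ a
      = pderiv' n (fun b => Lag n A B 0 (2*n+σ) b (fun i => w i.castSucc)) ⟨l-1, by have := hl2; omega⟩
          (fun i => a i.castSucc) := by
  rw [pderiv'_Lag_q (n+1) (by omega) A B 0 _ w ⟨l, by omega⟩ a,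
      pderiv'_Lag_q n (by omega) A B 0 _ (fun i => w i.castSucc) ⟨l-1, by omega⟩
        (fun i => a i.castSucc)]
  congr 1
  · congr 1
    rw [Fin.sum_univ_castSucc]
    have hlast : (∑ j : Fin (n+1),
        pderiv' (n+1) (fun q => Vpot (n+1)
          ((2 * ((n+1 : ℕ) : ℤ) - 0 - ((Fin.last n : ℕ) + 1) - ((j : ℕ) + 1)).toNat) q ⟨0, by omega⟩)
          ⟨l, by omega⟩ a * w (Fin.last n) * w j) = 0 := by
      apply Finset.sum_eq_zero
      intro j _
      rw [bridge_small n l _ (by omega) (by omega)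
        (by have := j.isLt; simp only [Fin.val_last]; omega) a]
      ring
    rw [hlast, add_zero]
    apply Finset.sum_congr rfl
    intro i _
    rw [Fin.sum_univ_castSucc]
    have hlast2 : pderiv' (n+1) (fun q => Vpot (n+1)
          ((2 * ((n+1 : ℕ) : ℤ) - 0 - ((i.castSucc : ℕ) + 1) - ((Fin.last n : ℕ) + 1)).toNat)
          q ⟨0, by omega⟩) ⟨l, by omega⟩ a = 0 :=
      bridge_small n l _ (by omega) (by omega)
        (by have := i.isLt; simp only [Fin.val_last, Fin.coe_castSucc]; omega) a
    rw [hlast2, zero_mul, zero_mul, add_zero]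
    apply Finset.sum_congr rfl
    intro j _
    have harith : ((2 * ((n+1 : ℕ) : ℤ) - 0 - ((i.castSucc : ℕ) + 1) - ((j.castSucc : ℕ) + 1)).toNat)
        - 2 = ((2 * (n : ℤ) - 0 - ((i : ℕ) + 1) - ((j : ℕ) + 1)).toNat) := by
      have hi := i.isLt; have hj := j.isLt
      simp only [Fin.coe_castSucc]
      omega
    rw [bridge_term n (by omega) l (by omega) (by omega) _
      (by have := i.isLt; have := j.isLt; simp only [Fin.coe_castSucc]; push_cast; omega)
      (by have := i.isLt; have := j.isLt; simp only [Fin.coe_castSucc]; push_cast; omega) a,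
      harith]
  · congr 1
    rw [bridge_term n (by omega) l (by omega) (by omega) (2*n+σ+2) (by omega) (by omega) a]
    have : 2*n+σ+2-2 = 2*n+σ := by omega
    rw [this]

set_option maxHeartbeats 1000000 in
lemma claim2 (n : ℕ) (hn : 2 ≤ n) (A B : ℝ) (σ l : ℕ) (hσ1 : 1 ≤ σ)
    (hl1 : σ+1 ≤ l) (hl2 : l ≤ n) (a v : Fin (n+1) → ℝ) :
    pderiv' (n+1) (fun b => Lag (n+1) A B 0 (2*n+σ+2) a b) ⟨l, by have := hl2; omega⟩ v
      = pderiv' n (fun b => Lag n A B 0 (2*n+σ) (fun i => a i.castSucc) b) ⟨l-1, by have := hl2; omega⟩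
          (fun i => v i.castSucc) := by
  rw [pderiv'_Lag_v (n+1) (by omega) A B 0 _ a ⟨l, by omega⟩ v,
      pderiv'_Lag_v n (by omega) A B 0 _ (fun i => a i.castSucc) ⟨l-1, by omega⟩
        (fun i => v i.castSucc)]
  congr 1
  congr 1
  · rw [Fin.sum_univ_castSucc]
    have hlast : V1 (n+1)
        ((2 * ((n+1 : ℕ) : ℤ) - 0 - (((⟨l, by omega⟩ : Fin (n+1)) : ℕ) + 1)
          - ((Fin.last n : ℕ) + 1)).toNat) a = 0 := by
      apply V1_small n (by omega)
      simp only [Fin.val_last, Fin.val_mk]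
      omega
    rw [hlast, zero_mul, add_zero]
    apply Finset.sum_congr rfl
    intro j _
    have hk1 : (1:ℕ) ≤ ((2 * ((n+1 : ℕ) : ℤ) - 0 - (((⟨l, by omega⟩ : Fin (n+1)) : ℕ) + 1)
        - ((j.castSucc : ℕ) + 1)).toNat) := by
      have := j.isLt
      simp only [Fin.coe_castSucc, Fin.val_mk]
      push_cast
      omega
    rw [V1_dim n (by omega) _ hk1
      (by have := j.isLt; simp only [Fin.coe_castSucc, Fin.val_mk]; push_cast; omega) a]
    have harith : ((2 * ((n+1 : ℕ) : ℤ) - 0 - (((⟨l, by omega⟩ : Fin (n+1)) : ℕ) + 1)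
        - ((j.castSucc : ℕ) + 1)).toNat) - 1
        = ((2 * (n : ℤ) - 0 - (((⟨l-1, by omega⟩ : Fin n) : ℕ) + 1) - ((j : ℕ) + 1)).toNat) := by
      have := j.isLt
      simp only [Fin.coe_castSucc, Fin.val_mk]
      omega
    rw [harith]
  · rw [Fin.sum_univ_castSucc]
    have hlast : V1 (n+1)
        ((2 * ((n+1 : ℕ) : ℤ) - 0 - ((Fin.last n : ℕ) + 1)
          - (((⟨l, by omega⟩ : Fin (n+1)) : ℕ) + 1)).toNat) a = 0 := by
      apply V1_small n (by omega)
      simp only [Fin.val_last, Fin.val_mk]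
      omega
    rw [hlast, zero_mul, add_zero]
    apply Finset.sum_congr rfl
    intro i _
    have hk1 : (1:ℕ) ≤ ((2 * ((n+1 : ℕ) : ℤ) - 0 - ((i.castSucc : ℕ) + 1)
        - (((⟨l, by omega⟩ : Fin (n+1)) : ℕ) + 1)).toNat) := by
      have := i.isLt
      simp only [Fin.coe_castSucc, Fin.val_mk]
      push_cast
      omega
    rw [V1_dim n (by omega) _ hk1
      (by have := i.isLt; simp only [Fin.coe_castSucc, Fin.val_mk]; push_cast; omega) a]
    have harith : ((2 * ((n+1 : ℕ) : ℤ) - 0 - ((i.castSucc : ℕ) + 1)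
        - (((⟨l, by omega⟩ : Fin (n+1)) : ℕ) + 1)).toNat) - 1
        = ((2 * (n : ℤ) - 0 - ((i : ℕ) + 1) - (((⟨l-1, by omega⟩ : Fin n) : ℕ) + 1)).toNat) := by
      have := i.isLt
      simp only [Fin.coe_castSucc, Fin.val_mk]
      omega
    rw [harith]

/-- Dimension-raising symmetry: for `σ ∈ {1,…,n−1}` and `l ∈ {σ+1,…,n}` (1-based),
`E_{l+1}(L^{n+1,0,2n+σ+2})(q_1,…,q_{n+1}) = E_l(L^{n,0,2n+σ})(q_1,…,q_n)` pointwise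
along every smooth curve `q : ℝ → ℝ^{n+1}`; in particular the left-hand side does not
depend on `q_{n+1}`. -/
theorem lagrangian_dimension_raising (n : ℕ) (hn : 2 ≤ n) (A B : ℝ) (hA : A ≠ 0)
    (σ : ℕ) (hσ1 : 1 ≤ σ) (hσ2 : σ ≤ n - 1)
    (l : ℕ) (hl1 : σ + 1 ≤ l) (hl2 : l ≤ n)
    (q : ℝ → Fin (n + 1) → ℝ) (hq : ContDiff ℝ (⊤ : ℕ∞) q) (x : ℝ) :
    EL (n + 1) (Lag (n + 1) A B 0 (2 * n + σ + 2)) ⟨l, by omega⟩ q x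
      = EL n (Lag n A B 0 (2 * n + σ)) ⟨l - 1, by omega⟩
          (fun y => fun i : Fin n => q y i.castSucc) x := by
  have hqd : Differentiable ℝ q := hq.differentiable (by simp)
  have hres : ∀ y, deriv (fun z => fun i : Fin n => q z i.castSucc) y
      = fun i => deriv q y i.castSucc := deriv_restrict n q hqd
  unfold EL
  congr 1
  · rw [hres x]
    exact claim1 n hn A B σ l hσ1 hl1 hl2 (q x) (deriv q x)
  · congr 1
    funext y
    rw [hres y]
    exact claim2 n hn A B σ l hσ1 hl1 hl2 (q y) (deriv q y)
end

section
/- Let D = {(x,t_2,t_3) ∈ ℝ³ : x⁶ + 45xt_3 − 15t_2x³ − 45t_2² ≠ 0} and define on D the rational functions q_1 = −3(675t_3² − 270t_3x⁵ + 2x¹⁰ + 675x⁴t_2² − 1350xt_2³)/(x⁶ + 45xt_3 − 15t_2x³ − 45t_2²)² and q_2 = 45(x³ − 3t_2)(x⁵ + 15x²t_2 − 30t_3)/(x⁶ + 45xt_3 − 15t_2x³ − 45t_2²)². Then on D the second Antonowicz–Fordy field vanishes identically: 2q_2 − 3q_1² − (1/2)∂_x² q_1 = 0; consequently, under the map u_1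 = 2q_1, u_2 = 2q_2 − 3q_1² − (1/2)∂_x² q_1, this zero-energy solution of the two-component cKdV hierarchy with α = 1 reduces to the solution u_1 = 2q_1, u_2 = 0 of the KdV hierarchy (α = 0, σ = 1). -/
/-- `q₁ = −3(675t₃² − 270t₃x⁵ + 2x¹⁰ + 675x⁴t₂² − 1350xt₂³)
/(x⁶ + 45xt₃ − 15t₂x³ − 45t₂²)²`. -/
noncomputable def q1sol (x t2 t3 : ℝ) : ℝ :=
  -3 * (675 * t3 ^ 2 - 270 * t3 * x ^ 5 + 2 * x ^ 10 + 675 * x ^ 4 * t2 ^ 2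
      - 1350 * x * t2 ^ 3)
    / (x ^ 6 + 45 * x * t3 - 15 * t2 * x ^ 3 - 45 * t2 ^ 2) ^ 2

/-- `q₂ = 45(x³ − 3t₂)(x⁵ + 15x²t₂ − 30t₃)/(x⁶ + 45xt₃ − 15t₂x³ − 45t₂²)²`. -/
noncomputable def q2sol (x t2 t3 : ℝ) : ℝ :=
  45 * (x ^ 3 - 3 * t2) * (x ^ 5 + 15 * x ^ 2 * t2 - 30 * t3)
    / (x ^ 6 + 45 * x * t3 - 15 * t2 * x ^ 3 - 45 * t2 ^ 2) ^ 2

/-!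
As a function of `x`, and also of `t₂`, `q₁` is a polynomial divided by the square of the
polynomial `τ = x⁶ + 45xt₃ − 15t₂x³ − 45t₂²`, and the `n`-th derivative of `P / D ^ k` is
`Nₙ / D ^ (k + n)` with `Nₙ₊₁ = Nₙ' D − (k + n) Nₙ D'`. Both identities thus become identities
between rational functions with powers of `τ` as denominators, which clear to polynomial
identities.
-/

open Polynomial

theorem iteratedDeriv_eq_of_forall_hasDerivAt {𝕜 F : Type*} [NontriviallyNormedField 𝕜]
    [NormedAddCommGroup F] [NormedSpace 𝕜 F] {U : Set 𝕜} (hU : IsOpen U) {f : ℕ → 𝕜 → F}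
    (hf : ∀ n, ∀ y ∈ U, HasDerivAt (f n) (f (n + 1) y) y) :
    ∀ n, ∀ y ∈ U, iteratedDeriv n (f 0) y = f n y := by
  intro n
  induction n with
  | zero => intro y _; rfl
  | succ n ih =>
    intro y hy
    rw [iteratedDeriv_succ, (Filter.eventuallyEq_of_mem (hU.mem_nhds hy) ih).deriv_eq]
    exact (hf n y hy).deriv

namespace Polynomial

variable {𝕜 : Type*} [NontriviallyNormedField 𝕜]

theorem hasDerivAt_eval_div_eval_pow (P D : 𝕜[X]) (k : ℕ) {x : 𝕜} (hx : D.eval x ≠ 0) :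
    HasDerivAt (fun y => P.eval y / D.eval y ^ k)
      ((derivative P * D - k * P * derivative D).eval x / D.eval x ^ (k + 1)) x := by
  refine ((P.hasDerivAt x).div ((D.hasDerivAt x).pow k) (pow_ne_zero k hx)).congr_deriv ?_
  rcases k with _ | k
  · simp [mul_div_assoc, div_self hx]
  · simp only [Pi.pow_apply, eval_sub, eval_mul, eval_natCast]
    field_simp
    push_cast
    ring

noncomputable def derivNumDivPow (P D : 𝕜[X]) (k : ℕ) : ℕ → 𝕜[X]
  | 0 => P
  | n + 1 => derivative (derivNumDivPow P D k n) * D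
      - (k + n : ℕ) * derivNumDivPow P D k n * derivative D

theorem iteratedDeriv_eval_div_eval_pow (P D : 𝕜[X]) (k n : ℕ) {x : 𝕜} (hx : D.eval x ≠ 0) :
    iteratedDeriv n (fun y => P.eval y / D.eval y ^ k) x
      = (derivNumDivPow P D k n).eval x / D.eval x ^ (k + n) := by
  have hU : IsOpen {y | D.eval y ≠ 0} := isOpen_ne_fun D.continuous continuous_const
  refine iteratedDeriv_eq_of_forall_hasDerivAt
    (f := fun n y => (derivNumDivPow P D k n).eval y / D.eval y ^ (k + n)) hU
    (fun n y hy => ?_) n x hx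
  simpa [derivNumDivPow, add_assoc] using
    hasDerivAt_eval_div_eval_pow (derivNumDivPow P D k n) D (k + n) hy

end Polynomial

noncomputable def numQ1X (t2 t3 : ℝ) : ℝ[X] :=
  C (-3) * (C (675 * t3 ^ 2) - C (270 * t3) * X ^ 5 + C 2 * X ^ 10
    + C (675 * t2 ^ 2) * X ^ 4 - C (1350 * t2 ^ 3) * X)

noncomputable def tauX (t2 t3 : ℝ) : ℝ[X] :=
  X ^ 6 + C (45 * t3) * X - C (15 * t2) * X ^ 3 - C (45 * t2 ^ 2)

noncomputable def numQ1T2 (x t3 : ℝ) : ℝ[X] :=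
  C (-3) * (C (675 * t3 ^ 2 - 270 * t3 * x ^ 5 + 2 * x ^ 10) + C (675 * x ^ 4) * X ^ 2
    - C (1350 * x) * X ^ 3)

noncomputable def tauT2 (x t3 : ℝ) : ℝ[X] :=
  C (x ^ 6 + 45 * x * t3) - C (15 * x ^ 3) * X - C 45 * X ^ 2

theorem eval_tauX (x t2 t3 : ℝ) :
    (tauX t2 t3).eval x = x ^ 6 + 45 * x * t3 - 15 * t2 * x ^ 3 - 45 * t2 ^ 2 := by
  simp only [tauX, eval_add, eval_sub, eval_mul, eval_C, eval_pow, eval_X]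
  ring

theorem eval_tauT2 (x t2 t3 : ℝ) :
    (tauT2 x t3).eval t2 = x ^ 6 + 45 * x * t3 - 15 * t2 * x ^ 3 - 45 * t2 ^ 2 := by
  simp only [tauT2, eval_sub, eval_mul, eval_C, eval_pow, eval_X]
  ring

theorem iteratedDeriv_const_mul_q1sol (c x t2 t3 : ℝ) (n : ℕ)
    (h : x ^ 6 + 45 * x * t3 - 15 * t2 * x ^ 3 - 45 * t2 ^ 2 ≠ 0) :
    iteratedDeriv n (fun y => c * q1sol y t2 t3) x
      = (derivNumDivPow (C c * numQ1X t2 t3) (tauX t2 t3) 2 n).eval x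
        / (x ^ 6 + 45 * x * t3 - 15 * t2 * x ^ 3 - 45 * t2 ^ 2) ^ (2 + n) := by
  have hq : (fun y => c * q1sol y t2 t3)
      = fun y => (C c * numQ1X t2 t3).eval y / (tauX t2 t3).eval y ^ 2 := by
    funext y
    simp only [q1sol, numQ1X, eval_tauX, eval_mul, eval_add, eval_sub, eval_C, eval_pow, eval_X]
    ring
  rw [hq, iteratedDeriv_eval_div_eval_pow _ _ _ _ (by rwa [eval_tauX]), eval_tauX]

theorem deriv_const_mul_q1sol_t2 (c x t2 t3 : ℝ)
    (h : x ^ 6 + 45 * x * t3 - 15 * t2 * x ^ 3 - 45 * t2 ^ 2 ≠ 0) :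
    deriv (fun s => c * q1sol x s t3) t2
      = (derivNumDivPow (C c * numQ1T2 x t3) (tauT2 x t3) 2 1).eval t2
        / (x ^ 6 + 45 * x * t3 - 15 * t2 * x ^ 3 - 45 * t2 ^ 2) ^ (2 + 1) := by
  have hq : (fun s => c * q1sol x s t3)
      = fun s => (C c * numQ1T2 x t3).eval s / (tauT2 x t3).eval s ^ 2 := by
    funext s
    simp only [q1sol, numQ1T2, eval_tauT2, eval_mul, eval_add, eval_sub, eval_C, eval_pow,
      eval_X]
    ring
  rw [hq, ← iteratedDeriv_one,
    iteratedDeriv_eval_div_eval_pow _ _ _ _ (by rwa [eval_tauT2]), eval_tauT2]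

/-- On the set where `x⁶ + 45xt₃ − 15t₂x³ − 45t₂² ≠ 0` the second Antonowicz–Fordy
field vanishes identically: `2q₂ − 3q₁² − (1/2)q_{1,xx} = 0`.  Consequently, under the
map `u₁ = 2q₁`, `u₂ = 2q₂ − 3q₁² − (1/2)q_{1,xx}`, this zero-energy solution of the
two-component cKdV hierarchy with `α = 1` reduces to the solution `u₁ = 2q₁`, `u₂ = 0`
of the KdV hierarchy (`α = 0`, `σ = 1`): `u₁` satisfies
`u_{1,t₂} = (3/2)u₁u_{1,x} + (1/4)u_{1,xxx}`. -/
theorem zero_energy_alpha1_reduces_to_kdv :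
    ∀ x t2 t3 : ℝ, x ^ 6 + 45 * x * t3 - 15 * t2 * x ^ 3 - 45 * t2 ^ 2 ≠ 0 →
      (2 * q2sol x t2 t3 - 3 * q1sol x t2 t3 ^ 2
          - (1 / 2) * iteratedDeriv 2 (fun y => q1sol y t2 t3) x = 0)
      ∧ (deriv (fun s => 2 * q1sol x s t3) t2
          = (3 / 2) * (2 * q1sol x t2 t3) * deriv (fun y => 2 * q1sol y t2 t3) x
            + (1 / 4) * iteratedDeriv 3 (fun y => 2 * q1sol y t2 t3) x) := by
  intro x t2 t3 h
  have hq1 := iteratedDeriv_const_mul_q1sol 1 x t2 t3 2 h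
  simp only [one_mul, map_one] at hq1
  rw [hq1, deriv_const_mul_q1sol_t2 _ _ _ _ h, ← iteratedDeriv_one,
    iteratedDeriv_const_mul_q1sol _ _ _ _ _ h, iteratedDeriv_const_mul_q1sol _ _ _ _ _ h]
  simp only [derivNumDivPow, numQ1X, tauX, numQ1T2, tauT2, derivative_mul, derivative_add,
    derivative_sub, derivative_C, derivative_X_pow, derivative_X, derivative_natCast,
    derivative_zero, derivative_one, zero_mul, mul_zero, add_zero, zero_add, sub_zero]
  simp only [eval_mul, eval_add, eval_sub, eval_C, eval_pow, eval_X, eval_one, eval_zero,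
    eval_natCast, q2sol, q1sol]
  push_cast
  -- an atom for `τ`, so that `field_simp` recognises every denominator as a power of it
  generalize hd : x ^ 6 + 45 * x * t3 - 15 * t2 * x ^ 3 - 45 * t2 ^ 2 = d at h ⊢
  constructor <;> field_simp <;> subst hd <;> ring
end
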